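/- Let x be a C¹ solution of the first-order singular Cucker–Smale system. Then finite-time flocking (sticking of all particles) occurs if and only if all natural velocities are identical; precisely: there exists T ≥ 0 such that x_i(t) = x_j(t) for all indices i, j and all t ≥ T, if and only if ν_i = ν_j for all indices i, j. -/

import Mathlib

/-!
If the particles `i` and `j` stick from time `T` on, their velocities agree after `T`, and so do
their interaction terms; hence `ν i = ν j`. Conversely, when all `ν i` agree, oddness of `Ψ` and
the symmetry of the double sum give, for `V = ∑ i j, (x i - x j) ^ 2`,
`V' = -(2κ / (1 - β)) ∑ i j, |x i - x j| ^ (2 - β) ≤ -(2κ / (1 - β)) V ^ ((2 - β) / 2)`,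
the inequality by subadditivity of `s ↦ s ^ p` for `p ≤ 1`. Since `(2 - β) / 2 < 1`, the quantity
`V ^ (β / 2)` decreases at a rate bounded below while `V > 0`, so `V` vanishes in finite time and,
being nonincreasing, stays zero.
-/

open Real Filter Set

/-- The interaction function `Ψ(x) = sign(x)·|x|^{1−β}/(1−β)`. -/
noncomputable def psiCS (β y : ℝ) : ℝ := Real.sign y * |y| ^ (1 - β) / (1 - β)

/-- A C¹ solution on `[0,∞)` of the first-order singular Cucker–Smale system:
`x_i'(t) = ν_i + (κ/N) Σ_k Ψ(x_k(t) − x_i(t))`. -/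
def IsCSSol (N : ℕ) (β κ : ℝ) (ν : Fin N → ℝ) (x : ℝ → Fin N → ℝ) : Prop :=
  (∀ i, ContDiffOn ℝ 1 (fun t => x t i) (Set.Ici 0)) ∧
  ∀ i, ∀ t ≥ (0:ℝ), HasDerivWithinAt (fun s => x s i)
    (ν i + (κ / (N:ℝ)) * ∑ k, psiCS β (x t k - x t i)) (Set.Ici 0) t

theorem Real.rpow_sum_le_sum_rpow {ι : Type*} (s : Finset ι) {f : ι → ℝ}
    (hf : ∀ i ∈ s, 0 ≤ f i) {p : ℝ} (hp0 : 0 < p) (hp1 : p ≤ 1) :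
    (∑ i ∈ s, f i) ^ p ≤ ∑ i ∈ s, f i ^ p := by
  induction s using Finset.cons_induction with
  | empty => simp [Real.zero_rpow hp0.ne']
  | cons a s ha ih =>
    simp only [Finset.forall_mem_cons] at hf
    rw [Finset.sum_cons, Finset.sum_cons]
    calc (f a + ∑ i ∈ s, f i) ^ p ≤ f a ^ p + (∑ i ∈ s, f i) ^ p :=
          Real.rpow_add_le_add_rpow hf.1 (Finset.sum_nonneg hf.2) hp0.le hp1
      _ ≤ f a ^ p + ∑ i ∈ s, f i ^ p := by gcongr; exact ih hf.2

theorem antitoneOn_Ici_of_hasDerivWithinAt_nonpos {f f' : ℝ → ℝ} {a : ℝ}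
    (hf : ∀ t ≥ a, HasDerivWithinAt f (f' t) (Ici a) t) (hf' : ∀ t > a, f' t ≤ 0) :
    AntitoneOn f (Ici a) :=
  antitoneOn_of_hasDerivWithinAt_nonpos (convex_Ici a)
    (fun t ht => (hf t ht).continuousWithinAt)
    (fun t ht => by
      rw [interior_Ici] at ht ⊢
      exact (hf t ht.le).mono Ioi_subset_Ici_self)
    (fun t ht => hf' t (by rwa [interior_Ici] at ht))

section FiniteTimeExtinction

variable {V V' : ℝ → ℝ} {c q : ℝ}

theorem exists_eq_zero_of_hasDerivWithinAt_le_neg_mul_rpow (hc : 0 < c) (hq : q < 1)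
    (hV : ∀ t ≥ 0, HasDerivWithinAt V (V' t) (Ici 0) t)
    (hV' : ∀ t ≥ 0, V' t ≤ -c * V t ^ q) (hV0 : ∀ t ≥ 0, 0 ≤ V t) :
    ∃ t ≥ 0, V t = 0 := by
  by_contra! hne
  have hpos : ∀ t ≥ 0, 0 < V t := fun t ht => (hV0 t ht).lt_of_ne' (hne t ht)
  set r := 1 - q
  have hr : 0 < r := sub_pos.2 hq
  have hanti : AntitoneOn (fun t => V t ^ r + c * r * t) (Ici 0) := by
    refine antitoneOn_Ici_of_hasDerivWithinAt_nonpos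
      (f' := fun t => V' t * r * V t ^ (r - 1) + c * r) (fun t ht => ?_) (fun t ht => ?_)
    · simpa using ((hV t ht).rpow_const (Or.inl (hpos t ht).ne')).fun_add
        ((hasDerivWithinAt_id t (Ici 0)).const_mul (c * r))
    · have hcancel : V t ^ q * V t ^ (r - 1) = 1 := by
        rw [← Real.rpow_add (hpos t ht.le), show q + (r - 1) = 0 by ring, Real.rpow_zero]
      have := mul_le_mul_of_nonneg_right (hV' t ht.le)
        (mul_nonneg hr.le (Real.rpow_nonneg (hV0 t ht.le) (r - 1)))
      linear_combination this - c * r * hcancel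
  set T := V 0 ^ r / (c * r) + 1
  have hT : 0 ≤ T := by have := Real.rpow_nonneg (hV0 0 le_rfl) r; positivity
  have hle := hanti self_mem_Ici hT hT
  have : c * r * T = V 0 ^ r + c * r := by simp only [T]; field_simp
  simp only [mul_zero, add_zero] at hle
  nlinarith [Real.rpow_nonneg (hV0 T hT) r, mul_pos hc hr]

theorem exists_forall_ge_eq_zero_of_hasDerivWithinAt_le_neg_mul_rpow (hc : 0 < c) (hq : q < 1)
    (hV : ∀ t ≥ 0, HasDerivWithinAt V (V' t) (Ici 0) t)
    (hV' : ∀ t ≥ 0, V' t ≤ -c * V t ^ q) (hV0 : ∀ t ≥ 0, 0 ≤ V t) :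
    ∃ T ≥ 0, ∀ t ≥ T, V t = 0 := by
  obtain ⟨T, hT, hVT⟩ := exists_eq_zero_of_hasDerivWithinAt_le_neg_mul_rpow hc hq hV hV' hV0
  have hanti : AntitoneOn V (Ici 0) := antitoneOn_Ici_of_hasDerivWithinAt_nonpos hV fun t ht =>
    (hV' t ht.le).trans (by nlinarith [Real.rpow_nonneg (hV0 t ht.le) q])
  refine ⟨T, hT, fun t ht => le_antisymm ?_ (hV0 t (hT.trans ht))⟩
  exact hVT ▸ hanti (mem_Ici.2 hT) (mem_Ici.2 (hT.trans ht)) ht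

end FiniteTimeExtinction

section PairwiseInteraction

variable {ι : Type*} [Fintype ι]

theorem sum_sum_eq_zero_of_antisymm (f : ι → ι → ℝ) (hf : ∀ i j, f j i = -f i j) :
    ∑ i, ∑ j, f i j = 0 := by
  have h : ∑ i, ∑ j, f i j = -∑ i, ∑ j, f i j := by
    conv_lhs => rw [Finset.sum_comm]
    rw [← Finset.sum_neg_distrib]
    exact Finset.sum_congr rfl fun j _ => by
      rw [← Finset.sum_neg_distrib]
      exact Finset.sum_congr rfl fun i _ => hf j i
  linarith

theorem sum_sum_sub_mul_sub_sum_eq (φ : ℝ → ℝ) (hφ : ∀ y, φ (-y) = -φ y) (a : ι → ℝ) :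
    ∑ i, ∑ j, (a i - a j) * (∑ k, φ (a k - a i) - ∑ k, φ (a k - a j)) =
      -(Fintype.card ι) * ∑ i, ∑ j, (a j - a i) * φ (a j - a i) := by
  set S : ι → ℝ := fun i => ∑ k, φ (a k - a i)
  have hφ' : ∀ i j, φ (a i - a j) = -φ (a j - a i) := fun i j => by rw [← hφ, neg_sub]
  have hS : ∑ i, S i = 0 := sum_sum_eq_zero_of_antisymm _ fun i j => hφ' i j
  have haS : 2 * ∑ i, a i * S i = -∑ i, ∑ j, (a j - a i) * φ (a j - a i) := by
    have h0 := sum_sum_eq_zero_of_antisymm (fun i j => (a i + a j) * φ (a j - a i))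
      fun i j => by rw [hφ' i j]; ring
    calc 2 * ∑ i, a i * S i
        = ∑ i, ∑ j, ((a i + a j) * φ (a j - a i) - (a j - a i) * φ (a j - a i)) := by
          simp only [S, Finset.mul_sum]
          exact Finset.sum_congr rfl fun i _ => Finset.sum_congr rfl fun j _ => by ring
      _ = -∑ i, ∑ j, (a j - a i) * φ (a j - a i) := by
          simp only [Finset.sum_sub_distrib, h0, zero_sub]
  have hexpand : ∑ i, ∑ j, (a i - a j) * (S i - S j) =
      2 * Fintype.card ι * ∑ i, a i * S i - 2 * (∑ i, a i) * ∑ i, S i := by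
    simp only [mul_sub, sub_mul, Finset.sum_sub_distrib, Finset.sum_const, Finset.card_univ,
      nsmul_eq_mul, ← Finset.mul_sum, ← Finset.sum_mul]
    ring
  rw [hexpand, hS]
  linear_combination (Fintype.card ι : ℝ) * haS

def pairwiseSqDist (a : ι → ℝ) : ℝ := ∑ i, ∑ j, (a i - a j) ^ 2

theorem pairwiseSqDist_nonneg (a : ι → ℝ) : 0 ≤ pairwiseSqDist a := by
  unfold pairwiseSqDist
  positivity

theorem pairwiseSqDist_eq_zero_iff {a : ι → ℝ} : pairwiseSqDist a = 0 ↔ ∀ i j, a i = a j := by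
  simp only [pairwiseSqDist]
  rw [Fintype.sum_eq_zero_iff_of_nonneg fun i => by positivity]
  simp only [funext_iff, Pi.zero_apply,
    Fintype.sum_eq_zero_iff_of_nonneg fun _ => sq_nonneg _, sq_eq_zero_iff, sub_eq_zero]

theorem pairwiseSqDist_rpow_le (a : ι → ℝ) {p : ℝ} (hp0 : 0 < p) (hp2 : p ≤ 2) :
    pairwiseSqDist a ^ (p / 2) ≤ ∑ i, ∑ j, |a i - a j| ^ p := by
  have hp0' : 0 < p / 2 := by positivity
  have hp2' : p / 2 ≤ 1 := by linarith
  calc pairwiseSqDist a ^ (p / 2) ≤ ∑ i, (∑ j, (a i - a j) ^ 2) ^ (p / 2) :=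
        Real.rpow_sum_le_sum_rpow _ (fun i _ => by positivity) hp0' hp2'
    _ ≤ ∑ i, ∑ j, ((a i - a j) ^ 2) ^ (p / 2) := Finset.sum_le_sum fun i _ =>
        Real.rpow_sum_le_sum_rpow _ (fun j _ => sq_nonneg _) hp0' hp2'
    _ = ∑ i, ∑ j, |a i - a j| ^ p := by
        refine Finset.sum_congr rfl fun i _ => Finset.sum_congr rfl fun j _ => ?_
        rw [← sq_abs, ← Real.rpow_natCast, ← Real.rpow_mul (abs_nonneg _)]
        norm_num [mul_div_cancel₀]

theorem hasDerivWithinAt_pairwiseSqDist {x : ℝ → ι → ℝ} {v : ι → ℝ} {s : Set ℝ} {t : ℝ}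
    (hx : ∀ i, HasDerivWithinAt (fun t => x t i) (v i) s t) :
    HasDerivWithinAt (fun t => pairwiseSqDist (x t))
      (∑ i, ∑ j, 2 * (x t i - x t j) * (v i - v j)) s t := by
  unfold pairwiseSqDist
  refine HasDerivWithinAt.fun_sum fun i _ => HasDerivWithinAt.fun_sum fun j _ => ?_
  simpa using ((hx i).fun_sub (hx j)).fun_pow 2

end PairwiseInteraction

theorem psiCS_neg (β y : ℝ) : psiCS β (-y) = -psiCS β y := by
  simp [psiCS, Real.sign_neg, neg_div]

theorem mul_psiCS {β : ℝ} (hβ : β ≠ 2) (y : ℝ) : y * psiCS β y = |y| ^ (2 - β) / (1 - β) := by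
  rcases eq_or_ne y 0 with rfl | hy
  · simp [psiCS, Real.zero_rpow (sub_ne_zero.2 hβ.symm)]
  · have hsign : y * Real.sign y = |y| := by
      rcases hy.lt_or_gt with hy | hy
      · rw [Real.sign_of_neg hy, abs_of_neg hy]; ring
      · rw [Real.sign_of_pos hy, abs_of_pos hy]; ring
    calc y * psiCS β y = (y * Real.sign y) * |y| ^ (1 - β) / (1 - β) := by unfold psiCS; ring
      _ = |y| ^ (2 - β) / (1 - β) := by
        rw [hsign, show 2 - β = 1 + (1 - β) by ring, Real.rpow_add (abs_pos.2 hy), Real.rpow_one]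

namespace IsCSSol

variable {N : ℕ} {β κ : ℝ} {ν : Fin N → ℝ} {x : ℝ → Fin N → ℝ}

theorem natural_velocity_eq_of_sticking (hx : IsCSSol N β κ ν x) {i j : Fin N} {T : ℝ}
    (hT : ∀ t ≥ T, x t i = x t j) : ν i = ν j := by
  set t := max T 0 + 1
  have ht0 : 0 < t := by positivity
  have hTt : T < t := by linarith [le_max_left T 0]
  have hi := (hx.2 i t ht0.le).hasDerivAt (Ici_mem_nhds ht0)
  have hj := (hx.2 j t ht0.le).hasDerivAt (Ici_mem_nhds ht0)
  have heq : (fun s => x s i) =ᶠ[nhds t] fun s => x s j :=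
    eventually_of_mem (Ici_mem_nhds hTt) hT
  have huniq := hi.unique (hj.congr_of_eventuallyEq heq)
  rwa [hT t hTt.le, add_left_inj] at huniq

theorem hasDerivWithinAt_pairwiseSqDist (hx : IsCSSol N β κ ν x) (hN : N ≠ 0) (hβ : β ≠ 2)
    (hν : ∀ i j, ν i = ν j) {t : ℝ} (ht : 0 ≤ t) :
    HasDerivWithinAt (fun s => pairwiseSqDist (x s))
      (-(2 * κ / (1 - β)) * ∑ i, ∑ j, |x t i - x t j| ^ (2 - β)) (Ici 0) t := by
  convert _root_.hasDerivWithinAt_pairwiseSqDist fun i => hx.2 i t ht using 1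
  set a := x t
  have hψ := sum_sum_sub_mul_sub_sum_eq (psiCS β) (psiCS_neg β) a
  rw [Fintype.card_fin] at hψ
  calc -(2 * κ / (1 - β)) * ∑ i, ∑ j, |a i - a j| ^ (2 - β)
      = 2 * (κ / N) * (-N * ∑ i, ∑ j, (a j - a i) * psiCS β (a j - a i)) := by
        conv_lhs => rw [Finset.sum_comm]
        simp only [mul_psiCS hβ, Finset.mul_sum]
        field_simp
    _ = ∑ i, ∑ j, 2 * (a i - a j) *
          (ν i + κ / N * ∑ k, psiCS β (a k - a i) - (ν j + κ / N * ∑ k, psiCS β (a k - a j))) := by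
        rw [← hψ, Finset.mul_sum]
        refine Finset.sum_congr rfl fun i _ => ?_
        rw [Finset.mul_sum]
        refine Finset.sum_congr rfl fun j _ => ?_
        rw [hν i j]
        ring

theorem exists_sticking_of_natural_velocity_eq (hx : IsCSSol N β κ ν x) (hN : N ≠ 0) (hβ0 : 0 < β) (hβ1 : β < 1)
    (hκ : 0 < κ) (hν : ∀ i j, ν i = ν j) :
    ∃ T ≥ 0, ∀ i j, ∀ t ≥ T, x t i = x t j := by
  have hc : 0 < 2 * κ / (1 - β) := div_pos (by positivity) (sub_pos.2 hβ1)
  have hdecay : ∀ t ≥ (0 : ℝ), -(2 * κ / (1 - β)) * ∑ i, ∑ j, |x t i - x t j| ^ (2 - β) ≤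
      -(2 * κ / (1 - β)) * pairwiseSqDist (x t) ^ ((2 - β) / 2) := fun t _ => by
    rw [neg_mul, neg_mul, neg_le_neg_iff]
    exact mul_le_mul_of_nonneg_left
      (pairwiseSqDist_rpow_le _ (by linarith) (by linarith)) hc.le
  obtain ⟨T, hT, hzero⟩ := exists_forall_ge_eq_zero_of_hasDerivWithinAt_le_neg_mul_rpow hc
    (by linarith) (fun t ht => hx.hasDerivWithinAt_pairwiseSqDist hN (by linarith) hν ht)
    hdecay fun t _ => pairwiseSqDist_nonneg _
  exact ⟨T, hT, fun i j t ht => pairwiseSqDist_eq_zero_iff.1 (hzero t ht) i j⟩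

end IsCSSol

/-- Finite-time flocking (sticking of all particles) occurs iff all natural velocities agree. -/
theorem stmt4 (N : ℕ) (hN : 2 ≤ N) (β κ : ℝ) (hβ0 : 0 < β) (hβ1 : β < 1)
    (hκ : 0 < κ) (ν : Fin N → ℝ) (x : ℝ → Fin N → ℝ) (hx : IsCSSol N β κ ν x) :
    (∃ T ≥ (0:ℝ), ∀ i j : Fin N, ∀ t ≥ T, x t i = x t j) ↔ (∀ i j : Fin N, ν i = ν j) :=
  ⟨fun ⟨_, _, hT⟩ i j => hx.natural_velocity_eq_of_sticking (hT i j),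
    hx.exists_sticking_of_natural_velocity_eq (by omega) hβ0 hβ1 hκ⟩
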